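/- Let d ∈ ℕ. There exists a constant c > 0, depending only on d, such that for every θ ∈ [0,1], every j ∈ ℤ, and all Lebesgue-measurable sets E, A, B ⊆ ℝ^d of finite measure, (∫_E I_j^θ(χ_A, χ_B)(x)^{1/2} dx)² ≤ c |A| |B| min{2^{dj}, |E|}. -/

import Mathlib

open MeasureTheory ENNReal

/-- The bilinear operator `I_j^θ(f,g)(x) = ∫_{|y| ≤ 2^j} f(x + (θ−1)y) g(x + θy) dy`. -/
noncomputable def Ij (d : ℕ) (j : ℤ) (θ : ℝ)
    (f g : EuclideanSpace ℝ (Fin d) → ℝ≥0∞) (x : EuclideanSpace ℝ (Fin d)) : ℝ≥0∞ :=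
  ∫⁻ y in {y : EuclideanSpace ℝ (Fin d) | ‖y‖ ≤ (2 : ℝ) ^ j},
    f (x + (θ - 1) • y) * g (x + θ • y)

/-
Two bounds are combined. Without the restriction `|y| ≤ 2^j` the double integral
`∫∫ χ_A(x + (θ - 1) y) χ_B(x + θ y) dy dx` equals `|A| |B|` (the substitution `x ↦ x - θ y`
factors it), so `∫ I ≤ |A| |B|` and Cauchy–Schwarz on `E` gives the bound by `|A| |B| |E|`.
For the bound by `2^{dj}`, tile `ℝ^d` by the dyadic cubes `Q` of side `2^j`: for `x ∈ Q` and
`|y| ≤ 2^j` both points `x + (θ - 1) y` and `x + θ y` lie in the union `Q*` of the `3^d` cubes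
adjacent to `Q`, so `∫_Q I ≤ |A ∩ Q*| |B ∩ Q*|`. Cauchy–Schwarz on each cube, then on the sum over
all cubes, together with the fact that every point lies in exactly `3^d` of the `Q*`, gives
`(∫ I^{1/2})² ≤ 9^d |A| |B| 2^{dj}`.
-/

namespace ENNReal

theorem rpow_one_half_rpow_two (x : ℝ≥0∞) : (x ^ (1 / 2 : ℝ)) ^ (2 : ℝ) = x := by
  rw [← rpow_mul]; norm_num

theorem rpow_one_half_sq (x : ℝ≥0∞) : (x ^ (1 / 2 : ℝ)) ^ 2 = x := by
  simpa using rpow_one_half_rpow_two x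

theorem sq_le_of_le_rpow_one_half {x y : ℝ≥0∞} (h : x ≤ y ^ (1 / 2 : ℝ)) : x ^ 2 ≤ y :=
  (pow_le_pow_left' h 2).trans_eq (rpow_one_half_sq y)

theorem tsum_rpow_one_half_mul_le {ι : Type*} (a b : ι → ℝ≥0∞) :
    ∑' k, (a k * b k) ^ (1 / 2 : ℝ) ≤ (∑' k, a k) ^ (1 / 2 : ℝ) * (∑' k, b k) ^ (1 / 2 : ℝ) := by
  refine ENNReal.summable.tsum_le_of_sum_le fun s => ?_
  have h := inner_le_Lp_mul_Lq s (fun k => a k ^ (1 / 2 : ℝ)) (fun k => b k ^ (1 / 2 : ℝ))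
    Real.HolderConjugate.two_two
  simp only [rpow_one_half_rpow_two] at h
  simp only [mul_rpow_of_nonneg _ _ (by norm_num : (0 : ℝ) ≤ 1 / 2)]
  exact h.trans (mul_le_mul' (rpow_le_rpow (ENNReal.sum_le_tsum s) (by norm_num))
    (rpow_le_rpow (ENNReal.sum_le_tsum s) (by norm_num)))

end ENNReal

theorem lintegral_rpow_one_half_le {α : Type*} [MeasurableSpace α] {μ : Measure α}
    {f : α → ℝ≥0∞} (hf : AEMeasurable f μ) :
    ∫⁻ x, f x ^ (1 / 2 : ℝ) ∂μ ≤ (∫⁻ x, f x ∂μ) ^ (1 / 2 : ℝ) * μ Set.univ ^ (1 / 2 : ℝ) := by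
  have h := ENNReal.lintegral_mul_le_Lp_mul_Lq μ Real.HolderConjugate.two_two
    (hf.pow_const (1 / 2 : ℝ)) (aemeasurable_const (b := (1 : ℝ≥0∞)))
  simpa only [Pi.mul_apply, mul_one, one_rpow, lintegral_one, rpow_one_half_rpow_two] using h

theorem tsum_measure_inter_le_of_tsum_indicator_le {α ι : Type*} [MeasurableSpace α]
    [Countable ι] {μ : Measure α} {S : ι → Set α} (hS : ∀ k, MeasurableSet (S k)) {M : ℝ≥0∞}
    (hM : ∀ x, ∑' k, (S k).indicator 1 x ≤ M) (A : Set α) :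
    ∑' k, μ (A ∩ S k) ≤ M * μ A := by
  calc ∑' k, μ (A ∩ S k) = ∫⁻ x in A, ∑' k, (S k).indicator 1 x ∂μ := by
        rw [lintegral_tsum fun k => (measurable_one.indicator (hS k)).aemeasurable]
        congr 1 with k
        rw [lintegral_indicator_one (hS k), Measure.restrict_apply (hS k), Set.inter_comm]
    _ ≤ ∫⁻ _ in A, M ∂μ := lintegral_mono hM
    _ = M * μ A := setLIntegral_const A M

section Shear

variable {E : Type*} [NormedAddCommGroup E] [NormedSpace ℝ E] [MeasurableSpace E] [BorelSpace E]
  [FiniteDimensional ℝ E] {μ : Measure E} [μ.IsAddHaarMeasure]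

theorem lintegral_lintegral_mul_comp_add_smul {f g : E → ℝ≥0∞} (hf : Measurable f)
    (hg : Measurable g) (θ : ℝ) :
    ∫⁻ x, ∫⁻ y, f (x + (θ - 1) • y) * g (x + θ • y) ∂μ ∂μ = (∫⁻ x, f x ∂μ) * ∫⁻ x, g x ∂μ := by
  have hshift : ∀ y, ∫⁻ x, f (x + (θ - 1) • y) * g (x + θ • y) ∂μ = ∫⁻ x, f (x - y) * g x ∂μ := by
    intro y
    rw [← lintegral_add_right_eq_self (fun x => f (x - y) * g x) (θ • y)]
    congr 1 with x
    rw [sub_smul, one_smul, add_sub_assoc]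
  calc ∫⁻ x, ∫⁻ y, f (x + (θ - 1) • y) * g (x + θ • y) ∂μ ∂μ
      = ∫⁻ y, ∫⁻ x, f (x - y) * g x ∂μ ∂μ := by
        rw [lintegral_lintegral_swap (by fun_prop)]
        simp_rw [hshift]
    _ = ∫⁻ x, (∫⁻ y, f (x - y) ∂μ) * g x ∂μ := by
        rw [lintegral_lintegral_swap (by fun_prop)]
        congr 1 with x
        exact lintegral_mul_const _ (hf.comp (measurable_const.sub measurable_id))
    _ = (∫⁻ x, f x ∂μ) * ∫⁻ x, g x ∂μ := by
        have hconv : ∀ x, ∫⁻ y, f (x - y) ∂μ = ∫⁻ y, f y ∂μ := fun x =>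
          (μ.measurePreserving_sub_left x).lintegral_comp hf
        simp_rw [hconv, lintegral_const_mul _ hg]

end Shear

variable {d : ℕ}

local notation "V" => EuclideanSpace ℝ (Fin d)

section Ij

variable {j : ℤ} {θ : ℝ} {f g : EuclideanSpace ℝ (Fin d) → ℝ≥0∞}

theorem measurable_Ij (hf : Measurable f) (hg : Measurable g) : Measurable (Ij d j θ f g) :=
  Measurable.lintegral_prod_right (f := fun x y => f (x + (θ - 1) • y) * g (x + θ • y))
    (by fun_prop)

theorem setLIntegral_Ij_le (hθ : θ ∈ Set.Icc (0 : ℝ) 1) (hf : Measurable f) (hg : Measurable g)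
    {Q R : Set V} (hR : MeasurableSet R)
    (hQR : ∀ x ∈ Q, ∀ y : V, ‖y‖ ≤ (2 : ℝ) ^ j → ∀ t : ℝ, |t| ≤ 1 → x + t • y ∈ R) :
    ∫⁻ x in Q, Ij d j θ f g x ≤ (∫⁻ x in R, f x) * ∫⁻ x in R, g x := by
  have hθ₀ : |θ| ≤ 1 := abs_le.mpr ⟨by linarith [hθ.1], hθ.2⟩
  have hθ₁ : |θ - 1| ≤ 1 := abs_le.mpr ⟨by linarith [hθ.1], by linarith [hθ.2]⟩
  have hball : MeasurableSet {y : V | ‖y‖ ≤ (2 : ℝ) ^ j} :=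
    measurableSet_le (by fun_prop) (by fun_prop)
  have hlocal : ∀ x ∈ Q, Ij d j θ f g x ≤
      ∫⁻ y, R.indicator f (x + (θ - 1) • y) * R.indicator g (x + θ • y) := by
    intro x hx
    refine le_trans (setLIntegral_mono' hball fun y hy => le_of_eq ?_)
      (setLIntegral_le_lintegral _ _)
    rw [Set.indicator_of_mem (hQR x hx y hy _ hθ₁), Set.indicator_of_mem (hQR x hx y hy _ hθ₀)]
  calc ∫⁻ x in Q, Ij d j θ f g x
      ≤ ∫⁻ x in Q, ∫⁻ y, R.indicator f (x + (θ - 1) • y) * R.indicator g (x + θ • y) :=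
        setLIntegral_mono (Measurable.lintegral_prod_right (by fun_prop)) hlocal
    _ ≤ ∫⁻ x, ∫⁻ y, R.indicator f (x + (θ - 1) • y) * R.indicator g (x + θ • y) :=
        setLIntegral_le_lintegral _ _
    _ = (∫⁻ x in R, f x) * ∫⁻ x in R, g x := by
        rw [lintegral_lintegral_mul_comp_add_smul (hf.indicator hR) (hg.indicator hR),
          lintegral_indicator hR, lintegral_indicator hR]

end Ij

section Dyadic

noncomputable def dyadicIndex (j : ℤ) (x : V) : Fin d → ℤ := fun i => ⌊x i / 2 ^ j⌋

variable (j : ℤ)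

theorem measurable_dyadicIndex : Measurable (dyadicIndex (d := d) j) :=
  measurable_pi_lambda _ fun _ => Int.measurable_floor.comp (by fun_prop)

theorem dyadicIndex_preimage_singleton (k : Fin d → ℤ) :
    dyadicIndex j ⁻¹' {k} =
      WithLp.ofLp ⁻¹' Set.univ.pi fun i => Set.Ico (2 ^ j * k i : ℝ) (2 ^ j * k i + 2 ^ j) := by
  have h2j : (0 : ℝ) < 2 ^ j := by positivity
  ext x
  simp only [Set.mem_preimage, Set.mem_singleton_iff, Set.mem_univ_pi, Set.mem_Ico, funext_iff,
    dyadicIndex, Int.floor_eq_iff, le_div_iff₀ h2j, div_lt_iff₀ h2j, mul_comm (2 ^ j : ℝ),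
    add_mul, one_mul]

theorem volume_dyadicIndex_preimage_singleton (k : Fin d → ℤ) :
    volume (dyadicIndex j ⁻¹' {k}) = 2 ^ ((d : ℤ) * j) := by
  rw [dyadicIndex_preimage_singleton, (PiLp.volume_preserving_ofLp _).measure_preimage
    (MeasurableSet.univ_pi fun _ => measurableSet_Ico).nullMeasurableSet, Real.volume_pi_Ico]
  simp only [add_sub_cancel_left, Finset.prod_const, Finset.card_univ, Fintype.card_fin]
  rw [show (2 : ℝ) ^ j = ((2 : NNReal) ^ j : NNReal) by simp, ENNReal.ofReal_coe_nnreal,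
    ← coe_pow, ← zpow_natCast, ← zpow_mul, mul_comm, ENNReal.coe_zpow two_ne_zero]
  rfl

theorem dyadicIndex_add_smul_mem_Icc {x y : V} (hy : ‖y‖ ≤ 2 ^ j) {t : ℝ} (ht : |t| ≤ 1) :
    dyadicIndex j (x + t • y) ∈ Set.Icc (dyadicIndex j x - 1) (dyadicIndex j x + 1) := by
  have h2j : (0 : ℝ) < 2 ^ j := by positivity
  refine ⟨fun i => ?_, fun i => ?_⟩ <;>
  · have hs : |t * y i / 2 ^ j| ≤ 1 := by
      rw [abs_div, abs_of_pos h2j, div_le_one h2j, abs_mul]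
      exact (mul_le_of_le_one_left (abs_nonneg _) ht).trans ((PiLp.norm_apply_le y i).trans hy)
    obtain ⟨hs₁, hs₂⟩ := abs_le.mp hs
    simp only [dyadicIndex, Pi.sub_apply, Pi.add_apply, Pi.one_apply, PiLp.add_apply,
      PiLp.smul_apply, smul_eq_mul, add_div, ← Int.floor_sub_one, ← Int.floor_add_one]
    exact Int.floor_le_floor (by linarith)

theorem tsum_indicator_dyadicIndex_preimage_Icc (x : V) :
    ∑' k, (dyadicIndex j ⁻¹' Set.Icc (k - 1) (k + 1)).indicator 1 x = (3 : ℝ≥0∞) ^ d := by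
  have hmem : ∀ k, dyadicIndex j x ∈ Set.Icc (k - 1) (k + 1) ↔
      k ∈ Finset.Icc (dyadicIndex j x - 1) (dyadicIndex j x + 1) := by
    intro k
    simp only [Set.mem_Icc, Finset.mem_Icc, Pi.le_def, Pi.sub_apply, Pi.add_apply, Pi.one_apply,
      ← forall_and]
    exact forall_congr' fun i => by omega
  calc ∑' k, (dyadicIndex j ⁻¹' Set.Icc (k - 1) (k + 1)).indicator 1 x
      = ∑' k, (Finset.Icc (dyadicIndex j x - 1) (dyadicIndex j x + 1) : Set (Fin d → ℤ)).indicator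
          (fun _ => 1) k := by
        congr 1 with k
        simp only [Set.indicator, Set.mem_preimage, hmem, Finset.mem_coe, Pi.one_apply]
    _ = (3 : ℝ≥0∞) ^ d := by
        rw [← tsum_subtype _ (fun _ => (1 : ℝ≥0∞)), Finset.tsum_subtype' _ (fun _ => (1 : ℝ≥0∞))]
        have hcard : ∀ m : ℤ, (Finset.Icc (m - 1) (m + 1)).card = 3 := fun m => by
          rw [Int.card_Icc]; omega
        simp [Pi.card_Icc, hcard]

end Dyadic

section Estimate

variable {θ : ℝ} {j : ℤ} {A B : Set (EuclideanSpace ℝ (Fin d))}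

theorem setLIntegral_Ij_indicator_le (hθ : θ ∈ Set.Icc (0 : ℝ) 1) (hA : MeasurableSet A)
    (hB : MeasurableSet B) {Q R : Set V} (hR : MeasurableSet R)
    (hQR : ∀ x ∈ Q, ∀ y : V, ‖y‖ ≤ (2 : ℝ) ^ j → ∀ t : ℝ, |t| ≤ 1 → x + t • y ∈ R) :
    ∫⁻ x in Q, Ij d j θ (A.indicator 1) (B.indicator 1) x ≤ volume (A ∩ R) * volume (B ∩ R) := by
  have h := setLIntegral_Ij_le hθ (measurable_one.indicator hA) (measurable_one.indicator hB)
    hR hQR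
  rwa [lintegral_indicator_one hA, lintegral_indicator_one hB, Measure.restrict_apply hA,
    Measure.restrict_apply hB] at h

theorem sq_setLIntegral_rpow_Ij_indicator_le_volume (hθ : θ ∈ Set.Icc (0 : ℝ) 1)
    (hA : MeasurableSet A) (hB : MeasurableSet B) (E : Set V) :
    (∫⁻ x in E, Ij d j θ (A.indicator 1) (B.indicator 1) x ^ (1 / 2 : ℝ)) ^ 2 ≤
      volume A * volume B * volume E := by
  have hglobal : ∫⁻ x in E, Ij d j θ (A.indicator 1) (B.indicator 1) x ≤ volume A * volume B := by
    simpa using setLIntegral_Ij_indicator_le hθ hA hB MeasurableSet.univ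
      (Q := E) fun _ _ _ _ _ _ => Set.mem_univ _
  refine sq_le_of_le_rpow_one_half ?_
  calc ∫⁻ x in E, Ij d j θ (A.indicator 1) (B.indicator 1) x ^ (1 / 2 : ℝ)
      ≤ (∫⁻ x in E, Ij d j θ (A.indicator 1) (B.indicator 1) x) ^ (1 / 2 : ℝ) *
          volume E ^ (1 / 2 : ℝ) := by
        simpa using lintegral_rpow_one_half_le (measurable_Ij (measurable_one.indicator hA)
          (measurable_one.indicator hB)).aemeasurable (μ := volume.restrict E)
    _ ≤ (volume A * volume B) ^ (1 / 2 : ℝ) * volume E ^ (1 / 2 : ℝ) := by gcongr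
    _ = (volume A * volume B * volume E) ^ (1 / 2 : ℝ) :=
        (mul_rpow_of_nonneg _ _ (by norm_num)).symm

theorem sq_lintegral_rpow_Ij_indicator_le_zpow (hθ : θ ∈ Set.Icc (0 : ℝ) 1)
    (hA : MeasurableSet A) (hB : MeasurableSet B) :
    (∫⁻ x, Ij d j θ (A.indicator 1) (B.indicator 1) x ^ (1 / 2 : ℝ)) ^ 2 ≤
      9 ^ d * volume A * volume B * 2 ^ ((d : ℤ) * j) := by
  set I := Ij d j θ (A.indicator 1) (B.indicator 1)
  set S : (Fin d → ℤ) → Set V := fun k => dyadicIndex j ⁻¹' Set.Icc (k - 1) (k + 1)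
  have hS : ∀ k, MeasurableSet (S k) := fun k => measurable_dyadicIndex j measurableSet_Icc
  have hoverlap : ∀ C : Set V, ∑' k, volume (C ∩ S k) ≤ 3 ^ d * volume C :=
    tsum_measure_inter_le_of_tsum_indicator_le hS
      fun x => (tsum_indicator_dyadicIndex_preimage_Icc j x).le
  have hcube : ∀ k, ∫⁻ x in dyadicIndex j ⁻¹' {k}, I x ^ (1 / 2 : ℝ) ≤
      (volume (A ∩ S k) * volume (B ∩ S k) * 2 ^ ((d : ℤ) * j)) ^ (1 / 2 : ℝ) := by
    intro k
    refine (lintegral_rpow_one_half_le (measurable_Ij (measurable_one.indicator hA)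
      (measurable_one.indicator hB)).aemeasurable).trans ?_
    rw [Measure.restrict_apply_univ, volume_dyadicIndex_preimage_singleton,
      mul_rpow_of_nonneg _ _ (by norm_num : (0 : ℝ) ≤ 1 / 2)]
    gcongr
    exact setLIntegral_Ij_indicator_le hθ hA hB (hS k) fun x hx y hy t ht =>
      (Set.mem_singleton_iff.mp hx) ▸ dyadicIndex_add_smul_mem_Icc j hy ht
  refine sq_le_of_le_rpow_one_half ?_
  calc ∫⁻ x, I x ^ (1 / 2 : ℝ)
      ≤ ∑' k, ∫⁻ x in dyadicIndex j ⁻¹' {k}, I x ^ (1 / 2 : ℝ) := by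
        rw [← setLIntegral_univ, ← Set.preimage_univ (f := dyadicIndex j),
          ← Set.iUnion_of_singleton, Set.preimage_iUnion]
        exact lintegral_iUnion_le _ _
    _ ≤ ∑' k, (volume (A ∩ S k) * volume (B ∩ S k) * 2 ^ ((d : ℤ) * j)) ^ (1 / 2 : ℝ) :=
        ENNReal.tsum_le_tsum hcube
    _ = (∑' k, (volume (A ∩ S k) * volume (B ∩ S k)) ^ (1 / 2 : ℝ)) *
          (2 ^ ((d : ℤ) * j)) ^ (1 / 2 : ℝ) := by
        simp only [mul_rpow_of_nonneg _ _ (by norm_num : (0 : ℝ) ≤ 1 / 2),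
          ENNReal.tsum_mul_right]
    _ ≤ (∑' k, volume (A ∩ S k)) ^ (1 / 2 : ℝ) * (∑' k, volume (B ∩ S k)) ^ (1 / 2 : ℝ) *
          (2 ^ ((d : ℤ) * j)) ^ (1 / 2 : ℝ) := by
        gcongr
        exact tsum_rpow_one_half_mul_le _ _
    _ ≤ (3 ^ d * volume A) ^ (1 / 2 : ℝ) * (3 ^ d * volume B) ^ (1 / 2 : ℝ) *
          (2 ^ ((d : ℤ) * j)) ^ (1 / 2 : ℝ) := by
        gcongr <;> exact hoverlap _
    _ = (9 ^ d * volume A * volume B * 2 ^ ((d : ℤ) * j)) ^ (1 / 2 : ℝ) := by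
        simp only [← mul_rpow_of_nonneg _ _ (by norm_num : (0 : ℝ) ≤ 1 / 2)]
        rw [show (9 : ℝ≥0∞) ^ d = 3 ^ d * 3 ^ d by rw [← mul_pow]; norm_num]
        ring_nf

end Estimate

theorem stmt6 (d : ℕ) :
    ∃ c : ℝ, 0 < c ∧
      ∀ θ : ℝ, θ ∈ Set.Icc (0 : ℝ) 1 → ∀ j : ℤ,
        ∀ E A B : Set (EuclideanSpace ℝ (Fin d)),
          MeasurableSet E → MeasurableSet A → MeasurableSet B →
          volume E < ∞ → volume A < ∞ → volume B < ∞ →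
          (∫⁻ x in E, (Ij d j θ (A.indicator 1) (B.indicator 1) x) ^ ((1 : ℝ) / 2)) ^ (2 : ℕ) ≤
            ENNReal.ofReal c * volume A * volume B *
              min ((2 : ℝ≥0∞) ^ ((d : ℤ) * j)) (volume E) := by
  refine ⟨9 ^ d, by positivity, fun θ hθ j E A B _ hA hB _ _ _ => ?_⟩
  rw [ENNReal.ofReal_pow (by norm_num), ENNReal.ofReal_ofNat, ← min_mul_mul_left]
  refine le_min ?_ ?_
  · exact (pow_le_pow_left' (setLIntegral_le_lintegral _ _) 2).trans
      (sq_lintegral_rpow_Ij_indicator_le_zpow hθ hA hB)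
  · refine (sq_setLIntegral_rpow_Ij_indicator_le_volume hθ hA hB E).trans ?_
    simp only [mul_assoc]
    exact le_mul_of_one_le_left' (one_le_pow₀ (by norm_num))
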